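/- (Maximum vertex based expansion.) Let 0 = p₀ < p₁ < ⋯ < p_r be integers. Let G be a graph on {1,…,r} for which the identity ordering is a GB ordering, and for each i = 1,…,r let G_i = (V_i,E_i) be a graph on V_i = {p_{i−1}+1,…,p_i} for which the natural (increasing) ordering of V_i is a GB ordering. Define the expanded graph G̃ on vertex set {1,…,p_r} by: (k,l) is an edge of G̃ if and only if either (k,l) ∈ E_i for some i, or k = p_i and l = p_j for some i ≠ j with (i,j) an edge of G. Then G̃ is a Generalized Bartlett graph, and the identity ordering on {1,…,p_r} is a GB ordering of G̃. -/

import Mathlib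

open SimpleGraph

variable {V : Type*}

/-- One step of the elimination/triangulation process: at step `k` (0-based) the vertex with
label `k` is eliminated, and all pairs of its neighbours with larger labels are joined. -/
def triStep {n : ℕ} (σ : V ≃ Fin n) (H : SimpleGraph V) (k : ℕ) : SimpleGraph V where
  Adj u v := H.Adj u v ∨
    (u ≠ v ∧ ∃ hk : k < n, k < (σ u : ℕ) ∧ k < (σ v : ℕ) ∧
      H.Adj u (σ.symm ⟨k, hk⟩) ∧ H.Adj v (σ.symm ⟨k, hk⟩))
  symm := by
    constructor
    rintro u v (h | ⟨hne, hk, h1, h2, h3, h4⟩)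
    · exact Or.inl h.symm
    · exact Or.inr ⟨hne.symm, hk, h2, h1, h4, h3⟩
  loopless := by
    constructor
    rintro u (h | ⟨hne, _⟩)
    · exact H.loopless.irrefl u h
    · exact hne rfl

/-- The sequence of graphs `E_0, E_1, …` in the triangulation process. -/
def triSeq {n : ℕ} (σ : V ≃ Fin n) (G : SimpleGraph V) : ℕ → SimpleGraph V
  | 0 => G
  | k + 1 => triStep σ (triSeq σ G k) k

/-- The triangulation `D^σ(G)` of `G` under the ordering `σ` (`p − 2` elimination steps). -/
def triangulation {n : ℕ} (σ : V ≃ Fin n) (G : SimpleGraph V) : SimpleGraph V :=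
  triSeq σ G (n - 2)

/-- `σ` is a perfect elimination ordering of `G`: for every `j`, the vertex `σ⁻¹(j)` together
with its higher-labelled neighbours forms a clique. -/
def IsPerfectElimOrdering {n : ℕ} (σ : V ≃ Fin n) (G : SimpleGraph V) : Prop :=
  ∀ j : Fin n,
    G.IsClique ({σ.symm j} ∪ {v : V | (j : ℕ) < (σ v : ℕ) ∧ G.Adj v (σ.symm j)})

/-- A graph is decomposable (chordal) if it has no induced cycle of length `≥ 4`. -/
def IsDecomposable (G : SimpleGraph V) : Prop :=
  ∀ n : ℕ, 4 ≤ n → IsEmpty (SimpleGraph.cycleGraph n ↪g G)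

/-- `σ` is a Generalized Bartlett ordering of `G`: no triangle of `D^σ(G)` consists of three
non-edges of `G`. -/
def IsGBOrdering {n : ℕ} (σ : V ≃ Fin n) (G : SimpleGraph V) : Prop :=
  ¬ ∃ u v w : V,
      ¬ G.Adj u v ∧ ¬ G.Adj v w ∧ ¬ G.Adj u w ∧
      (triangulation σ G).Adj u v ∧ (triangulation σ G).Adj v w ∧
      (triangulation σ G).Adj u w

/-- `G` is a Generalized Bartlett graph: it admits a Generalized Bartlett ordering. -/
def IsGB (G : SimpleGraph V) : Prop :=
  ∃ (n : ℕ) (σ : V ≃ Fin n), IsGBOrdering σ G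

/-!
With 0-based labels, block `i` consists of the vertices `P i, …, P (i + 1) - 1`, and its last
vertex `P (i + 1) - 1` stands for the vertex `i` of `G`. Let `ExpandAdj` relate two vertices of
one block that are adjacent in the triangulation of that block, and the last vertices of blocks
`i ≠ j` with `i ~ j` in the triangulation of `G`. This relation contains the expanded graph and is
closed under fill-in (eliminating a last vertex only creates fill-in among last vertices, since
no block-neighbour of it comes later), while the triangulation is the least fill-closed relation
containing the graph. A triangle of `ExpandAdj` cannot mix the two kinds of pairs, because a
vertex lies in one block and is the last vertex of at most one; so a triangle of non-edges in
the triangulation of the expanded graph would be one in the triangulation of a block or of `G`.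
-/

section Triangulation

variable {n : ℕ}

def IsFillClosed (σ : V ≃ Fin n) (R : V → V → Prop) : Prop :=
  ∀ ⦃x y z⦄, R x z → R y z → x ≠ y → σ z < σ x → σ z < σ y → R x y

variable (σ : V ≃ Fin n) (G : SimpleGraph V)

theorem triSeq_mono : Monotone (triSeq σ G) :=
  monotone_nat_of_le_succ fun _ _ _ h => Or.inl h

theorem le_triangulation : G ≤ triangulation σ G :=
  triSeq_mono σ G (Nat.zero_le _)

/-- Steps after the elimination of `z` only join vertices of larger label than the eliminated
one, so they never add an edge at `z`. -/
theorem triSeq_adj_label_of_adj (m : ℕ) {x z : V} (h : (triSeq σ G m).Adj x z) :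
    (triSeq σ G (σ z)).Adj x z := by
  revert h
  induction m with
  | zero => exact fun h => triSeq_mono σ G (Nat.zero_le _) h
  | succ m ih => exact fun h => h.elim ih fun ⟨_, _, _, hzm, _, _⟩ => triSeq_mono σ G hzm h

theorem triangulation_isFillClosed : IsFillClosed σ (triangulation σ G).Adj := by
  intro x y z hxz hyz hxy hzx hzy
  have hσxy : σ x ≠ σ y := σ.injective.ne hxy
  have hstep : (triSeq σ G (σ z + 1)).Adj x y := by
    refine Or.inr ⟨hxy, (σ z).isLt, hzx, hzy, ?_, ?_⟩ <;> rw [Fin.eta, Equiv.symm_apply_apply]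
    exacts [triSeq_adj_label_of_adj σ G _ hxz, triSeq_adj_label_of_adj σ G _ hyz]
  have hlast : (σ z : ℕ) + 1 ≤ n - 2 := by
    have := (σ x).isLt
    have := (σ y).isLt
    have := Fin.val_ne_of_ne hσxy
    rw [Fin.lt_def] at hzx hzy
    omega
  exact triSeq_mono σ G hlast hstep

variable {σ G}

theorem IsFillClosed.triSeq_adj {R : V → V → Prop} (hR : IsFillClosed σ R)
    (hGR : ∀ ⦃x y⦄, G.Adj x y → R x y) (m : ℕ) ⦃x y : V⦄ (h : (triSeq σ G m).Adj x y) :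
    R x y := by
  induction m generalizing x y with
  | zero => exact hGR h
  | succ m ih =>
    rcases h with h | ⟨hxy, _, hx, hy, hxz, hyz⟩
    · exact ih h
    · refine hR (ih hxz) (ih hyz) hxy ?_ ?_ <;> simpa [Fin.lt_def]

theorem IsFillClosed.triangulation_adj {R : V → V → Prop} (hR : IsFillClosed σ R)
    (hGR : ∀ ⦃x y⦄, G.Adj x y → R x y) ⦃x y : V⦄ (h : (triangulation σ G).Adj x y) : R x y :=
  hR.triSeq_adj hGR (n - 2) h

end Triangulation

section Blocks

variable {r : ℕ} {P : ℕ → ℕ}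

theorem blockEnd_le_blockStart_of_lt (hP : StrictMonoOn P (Set.Iic r)) {i j : Fin r}
    (hij : i < j) : P ((i : ℕ) + 1) ≤ P j :=
  hP.monotoneOn (Set.mem_Iic.2 i.isLt) (Set.mem_Iic.2 j.isLt.le) hij

theorem eq_of_mem_block (hP : StrictMonoOn P (Set.Iic r)) {i j : Fin r} {m : ℕ}
    (hi : P i ≤ m ∧ m < P ((i : ℕ) + 1)) (hj : P j ≤ m ∧ m < P ((j : ℕ) + 1)) : i = j := by
  rcases lt_trichotomy i j with hij | hij | hij
  · have := blockEnd_le_blockStart_of_lt hP hij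
    omega
  · exact hij
  · have := blockEnd_le_blockStart_of_lt hP hij
    omega

theorem blockStart_lt_blockEnd (hP : StrictMonoOn P (Set.Iic r)) (i : Fin r) :
    P i < P ((i : ℕ) + 1) :=
  hP (Set.mem_Iic.2 i.isLt.le) (Set.mem_Iic.2 i.isLt) (Nat.lt_succ_self _)

theorem eq_of_blockEnd_eq (hP : StrictMonoOn P (Set.Iic r)) {i j : Fin r}
    (h : P ((i : ℕ) + 1) = P ((j : ℕ) + 1)) : i = j :=
  Fin.ext (Nat.succ_injective (hP.injOn (Set.mem_Iic.2 i.isLt) (Set.mem_Iic.2 j.isLt) h))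

theorem lt_of_blockEnd_lt (hP : StrictMonoOn P (Set.Iic r)) {i j : Fin r}
    (h : P ((i : ℕ) + 1) < P ((j : ℕ) + 1)) : i < j :=
  Fin.lt_def.2 (Nat.succ_lt_succ_iff.1
    ((hP.lt_iff_lt (Set.mem_Iic.2 i.isLt) (Set.mem_Iic.2 j.isLt)).1 h))

theorem eq_of_add_eq_add (hP : StrictMonoOn P (Set.Iic r)) {i j : Fin r}
    (a : Fin (P ((i : ℕ) + 1) - P i)) (b : Fin (P ((j : ℕ) + 1) - P j))
    (h : P i + (a : ℕ) = P j + b) : i = j :=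
  eq_of_mem_block hP (m := P i + a) ⟨by omega, by omega⟩ ⟨by omega, by omega⟩

theorem eq_of_add_add_one_eq_blockEnd (hP : StrictMonoOn P (Set.Iic r)) {i j : Fin r}
    (a : Fin (P ((i : ℕ) + 1) - P i)) (h : P i + (a : ℕ) + 1 = P ((j : ℕ) + 1)) : i = j := by
  have := blockStart_lt_blockEnd hP j
  exact eq_of_mem_block hP (m := P i + a) ⟨by omega, by omega⟩ ⟨by omega, by omega⟩

def BlockAdj (P : ℕ → ℕ) (B : ∀ i : Fin r, SimpleGraph (Fin (P ((i : ℕ) + 1) - P i)))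
    (x y : ℕ) : Prop :=
  ∃ (i : Fin r) (a b : Fin (P ((i : ℕ) + 1) - P i)),
    (B i).Adj a b ∧ x = P i + (a : ℕ) ∧ y = P i + (b : ℕ)

def TopAdj (P : ℕ → ℕ) (T : SimpleGraph (Fin r)) (x y : ℕ) : Prop :=
  ∃ i j : Fin r, i ≠ j ∧ T.Adj i j ∧ x + 1 = P ((i : ℕ) + 1) ∧ y + 1 = P ((j : ℕ) + 1)

def ExpandAdj (P : ℕ → ℕ) (B : ∀ i : Fin r, SimpleGraph (Fin (P ((i : ℕ) + 1) - P i)))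
    (T : SimpleGraph (Fin r)) (x y : ℕ) : Prop :=
  BlockAdj P B x y ∨ TopAdj P T x y

variable {B B' : ∀ i : Fin r, SimpleGraph (Fin (P ((i : ℕ) + 1) - P i))}
  {T T' : SimpleGraph (Fin r)} {x y z : ℕ}

namespace BlockAdj

theorem symm (h : BlockAdj P B x y) : BlockAdj P B y x :=
  let ⟨i, a, b, hab, hx, hy⟩ := h
  ⟨i, b, a, hab.symm, hy, hx⟩

theorem mono (hBB' : ∀ i, B i ≤ B' i) (h : BlockAdj P B x y) : BlockAdj P B' x y :=
  let ⟨i, a, b, hab, hx, hy⟩ := h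
  ⟨i, a, b, hBB' i hab, hx, hy⟩

theorem ne (h : BlockAdj P B x y) : x ≠ y := by
  obtain ⟨i, a, b, hab, rfl, rfl⟩ := h
  exact fun hxy => hab.ne (Fin.ext (by omega))

theorem exists_offset (hP : StrictMonoOn P (Set.Iic r)) (h : BlockAdj P B x y) {i : Fin r}
    {a : Fin (P ((i : ℕ) + 1) - P i)} (hx : x = P i + (a : ℕ)) :
    ∃ b : Fin (P ((i : ℕ) + 1) - P i), y = P i + (b : ℕ) ∧ (B i).Adj a b := by
  obtain ⟨i', a', b, hab, hx', hy⟩ := h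
  obtain rfl : i' = i := eq_of_add_eq_add hP a' a (hx'.symm.trans hx)
  obtain rfl : a' = a := Fin.ext (by omega)
  exact ⟨b, hy, hab⟩

theorem le_of_eq_blockEnd (hP : StrictMonoOn P (Set.Iic r)) (h : BlockAdj P B x z) {j : Fin r}
    (hz : z + 1 = P ((j : ℕ) + 1)) : x ≤ z := by
  obtain ⟨i, a, c, -, rfl, rfl⟩ := h
  obtain rfl := eq_of_add_add_one_eq_blockEnd hP c hz
  omega

theorem not_expandAdj_of_topAdj (hP : StrictMonoOn P (Set.Iic r)) (hxy : BlockAdj P B x y)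
    (hyz : TopAdj P T y z) : ¬ ExpandAdj P B T x z := by
  obtain ⟨j, l, hjl, -, hy', hz⟩ := hyz
  rintro (⟨m, a', c', -, hx', hz'⟩ | ⟨m, -, -, -, hx', -⟩)
  · obtain ⟨i, a, b, -, hx, hy⟩ := hxy
    have hij : i = j := eq_of_add_add_one_eq_blockEnd hP b (by omega)
    have hmi : m = i := eq_of_add_eq_add hP a' a (hx'.symm.trans hx)
    have hml : m = l := eq_of_add_add_one_eq_blockEnd hP c' (by omega)
    exact hjl (hij.symm.trans (hmi.symm.trans hml))
  · exact hxy.ne (le_antisymm (hxy.le_of_eq_blockEnd hP hy') (hxy.symm.le_of_eq_blockEnd hP hx'))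

theorem triangle (hP : StrictMonoOn P (Set.Iic r)) {u v w : ℕ} (huv : BlockAdj P B u v)
    (hvw : BlockAdj P B v w) (huw : BlockAdj P B u w) :
    ∃ (i : Fin r) (a b c : Fin (P ((i : ℕ) + 1) - P i)),
      (B i).Adj a b ∧ (B i).Adj b c ∧ (B i).Adj a c ∧
      u = P i + (a : ℕ) ∧ v = P i + (b : ℕ) ∧ w = P i + (c : ℕ) := by
  obtain ⟨i, a, b, hab, hu, hv⟩ := huv
  obtain ⟨c, hw, hbc⟩ := hvw.exists_offset hP hv
  obtain ⟨c', hw', hac⟩ := huw.exists_offset hP hu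
  obtain rfl : c' = c := Fin.ext (by omega)
  exact ⟨i, a, b, c', hab, hbc, hac, hu, hv, hw⟩

end BlockAdj

theorem topAdj_iff (hP : StrictMonoOn P (Set.Iic r)) {i j : Fin r} (hx : x + 1 = P ((i : ℕ) + 1))
    (hy : y + 1 = P ((j : ℕ) + 1)) : TopAdj P T x y ↔ T.Adj i j := by
  refine ⟨fun ⟨i', j', _, hT, hx', hy'⟩ => ?_, fun hT => ⟨i, j, hT.ne, hT, hx, hy⟩⟩
  obtain rfl : i' = i := eq_of_blockEnd_eq hP (hx'.symm.trans hx)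
  obtain rfl : j' = j := eq_of_blockEnd_eq hP (hy'.symm.trans hy)
  exact hT

namespace TopAdj

theorem symm (h : TopAdj P T x y) : TopAdj P T y x :=
  let ⟨i, j, hij, hT, hx, hy⟩ := h
  ⟨j, i, hij.symm, hT.symm, hy, hx⟩

theorem mono (hTT' : T ≤ T') (h : TopAdj P T x y) : TopAdj P T' x y :=
  let ⟨i, j, hij, hT, hx, hy⟩ := h
  ⟨i, j, hij, hTT' hT, hx, hy⟩

theorem triangle (hP : StrictMonoOn P (Set.Iic r)) {u v w : ℕ} (huv : TopAdj P T u v)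
    (hvw : TopAdj P T v w) (huw : TopAdj P T u w) :
    ∃ i j l : Fin r, T.Adj i j ∧ T.Adj j l ∧ T.Adj i l ∧
      u + 1 = P ((i : ℕ) + 1) ∧ v + 1 = P ((j : ℕ) + 1) ∧ w + 1 = P ((l : ℕ) + 1) := by
  obtain ⟨i, j, -, hij, hu, hv⟩ := huv
  obtain ⟨-, l, -, -, -, hw⟩ := id hvw
  exact ⟨i, j, l, hij, (topAdj_iff hP hv hw).1 hvw, (topAdj_iff hP hu hw).1 huw, hu, hv, hw⟩

end TopAdj

namespace ExpandAdj

theorem mono (hBB' : ∀ i, B i ≤ B' i) (hTT' : T ≤ T') (h : ExpandAdj P B T x y) :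
    ExpandAdj P B' T' x y :=
  h.imp (BlockAdj.mono hBB') (TopAdj.mono hTT')

theorem triangle (hP : StrictMonoOn P (Set.Iic r)) {u v w : ℕ} (huv : ExpandAdj P B T u v)
    (hvw : ExpandAdj P B T v w) (huw : ExpandAdj P B T u w) :
    (∃ (i : Fin r) (a b c : Fin (P ((i : ℕ) + 1) - P i)),
      (B i).Adj a b ∧ (B i).Adj b c ∧ (B i).Adj a c ∧
      u = P i + (a : ℕ) ∧ v = P i + (b : ℕ) ∧ w = P i + (c : ℕ)) ∨
    (∃ i j l : Fin r, T.Adj i j ∧ T.Adj j l ∧ T.Adj i l ∧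
      u + 1 = P ((i : ℕ) + 1) ∧ v + 1 = P ((j : ℕ) + 1) ∧ w + 1 = P ((l : ℕ) + 1)) := by
  rcases huv with huv | huv <;> rcases hvw with hvw | hvw <;> rcases huw with huw | huw
  · exact Or.inl (huv.triangle hP hvw huw)
  · exact (huv.symm.not_expandAdj_of_topAdj hP huw (Or.inl hvw)).elim
  · exact (huv.not_expandAdj_of_topAdj hP hvw (Or.inl huw)).elim
  · exact (huv.not_expandAdj_of_topAdj hP hvw (Or.inr huw)).elim
  · exact (hvw.symm.not_expandAdj_of_topAdj hP huv.symm (Or.inl huw.symm)).elim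
  · exact (hvw.symm.not_expandAdj_of_topAdj hP huv.symm (Or.inr huw.symm)).elim
  · exact (huw.symm.not_expandAdj_of_topAdj hP huv (Or.inr hvw.symm)).elim
  · exact Or.inr (huv.triangle hP hvw huw)

theorem isFillClosed (hP : StrictMonoOn P (Set.Iic r))
    (hB : ∀ i, IsFillClosed (Equiv.refl _) (B i).Adj) (hT : IsFillClosed (Equiv.refl _) T.Adj) :
    IsFillClosed (Equiv.refl (Fin (P r))) fun x y => ExpandAdj P B T x y := by
  intro x y z hxz hyz hxy hzx hzy
  change (z : ℕ) < x at hzx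
  change (z : ℕ) < y at hzy
  rcases hxz with hxz | hxz <;> rcases hyz with hyz | hyz
  · obtain ⟨i, a, c, hac, hx, hz⟩ := hxz
    obtain ⟨b, hy, hcb⟩ := hyz.symm.exists_offset hP hz
    refine Or.inl ⟨i, a, b, hB i hac hcb.symm ?_ ?_ ?_, hx, hy⟩
    · exact fun hab => hxy (Fin.ext (by rw [hx, hy, hab]))
    · exact show (c : ℕ) < a by omega
    · exact show (c : ℕ) < b by omega
  · obtain ⟨-, j, -, -, -, hz⟩ := hyz
    exact absurd (hxz.le_of_eq_blockEnd hP hz) (by omega)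
  · obtain ⟨-, j, -, -, -, hz⟩ := hxz
    exact absurd (hyz.le_of_eq_blockEnd hP hz) (by omega)
  · obtain ⟨i, j, -, hij, hx, hz⟩ := hxz
    obtain ⟨l, j', -, hlj, hy, hz'⟩ := hyz
    obtain rfl : j = j' := eq_of_blockEnd_eq hP (hz.symm.trans hz')
    have hil : i ≠ l := by
      rintro rfl
      exact hxy (Fin.ext (by omega))
    have hji : j < i := lt_of_blockEnd_lt hP (by omega)
    have hjl : j < l := lt_of_blockEnd_lt hP (by omega)
    exact Or.inr ⟨i, l, hil, hT hij hlj hil hji hjl, hx, hy⟩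

end ExpandAdj

end Blocks

theorem isGB_expanded_graph_general (r : ℕ) (P : ℕ → ℕ)
    (hPmono : ∀ i < r, P i < P (i + 1))
    (G : SimpleGraph (Fin r)) (hG : IsGBOrdering (Equiv.refl (Fin r)) G)
    (Gi : ∀ i : Fin r, SimpleGraph (Fin (P ((i : ℕ) + 1) - P (i : ℕ))))
    (hGi : ∀ i : Fin r, IsGBOrdering (Equiv.refl (Fin (P ((i : ℕ) + 1) - P (i : ℕ)))) (Gi i))
    (Gexp : SimpleGraph (Fin (P r)))
    (hGexp : ∀ k l : Fin (P r), Gexp.Adj k l ↔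
      ((∃ (i : Fin r) (a b : Fin (P ((i : ℕ) + 1) - P (i : ℕ))),
          (Gi i).Adj a b ∧ (k : ℕ) = P (i : ℕ) + (a : ℕ) ∧ (l : ℕ) = P (i : ℕ) + (b : ℕ)) ∨
       (∃ i j : Fin r, i ≠ j ∧ G.Adj i j ∧
          (k : ℕ) + 1 = P ((i : ℕ) + 1) ∧ (l : ℕ) + 1 = P ((j : ℕ) + 1)))) :
    IsGBOrdering (Equiv.refl (Fin (P r))) Gexp ∧ IsGB Gexp := by
  have hP : StrictMonoOn P (Set.Iic r) := strictMonoOn_Iic_of_lt_succ hPmono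
  have hD : ∀ ⦃x y : Fin (P r)⦄, (triangulation (Equiv.refl _) Gexp).Adj x y →
      ExpandAdj P (fun i => triangulation (Equiv.refl _) (Gi i))
        (triangulation (Equiv.refl _) G) x y :=
    (ExpandAdj.isFillClosed hP (fun i => triangulation_isFillClosed _ _)
      (triangulation_isFillClosed _ _)).triangulation_adj fun x y h =>
        ExpandAdj.mono (fun i => le_triangulation _ _) (le_triangulation _ _) ((hGexp x y).1 h)
  have hGB : IsGBOrdering (Equiv.refl (Fin (P r))) Gexp := by
    rintro ⟨u, v, w, nuv, nvw, nuw, duv, dvw, duw⟩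
    rcases ExpandAdj.triangle hP (hD duv) (hD dvw) (hD duw) with
      ⟨i, a, b, c, hab, hbc, hac, hu, hv, hw⟩ | ⟨i, j, l, hij, hjl, hil, hu, hv, hw⟩
    · refine hGi i ⟨a, b, c, ?_, ?_, ?_, hab, hbc, hac⟩
      · exact fun h => nuv ((hGexp u v).2 (Or.inl ⟨i, a, b, h, hu, hv⟩))
      · exact fun h => nvw ((hGexp v w).2 (Or.inl ⟨i, b, c, h, hv, hw⟩))
      · exact fun h => nuw ((hGexp u w).2 (Or.inl ⟨i, a, c, h, hu, hw⟩))
    · refine hG ⟨i, j, l, ?_, ?_, ?_, hij, hjl, hil⟩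
      · exact fun h => nuv ((hGexp u v).2 (Or.inr ⟨i, j, h.ne, h, hu, hv⟩))
      · exact fun h => nvw ((hGexp v w).2 (Or.inr ⟨j, l, h.ne, h, hv, hw⟩))
      · exact fun h => nuw ((hGexp u w).2 (Or.inr ⟨i, l, h.ne, h, hu, hw⟩))
  exact ⟨hGB, P r, Equiv.refl _, hGB⟩

/-- Maximum vertex based expansion: replacing each vertex `i` of a GB graph `G`
on `{1,…,r}` (identity GB ordering) by a GB graph `Gi i` on the block `{p_{i−1}+1,…,p_i}`
(natural GB ordering), and joining the maximal vertices `p_i, p_j` of blocks `i ≠ j` exactly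
when `(i,j)` is an edge of `G`, yields a Generalized Bartlett graph with the identity ordering
as a GB ordering. -/
theorem isGB_expanded_graph (r : ℕ) (P : ℕ → ℕ) (hP0 : P 0 = 0)
    (hPmono : ∀ i < r, P i < P (i + 1))
    (G : SimpleGraph (Fin r)) (hG : IsGBOrdering (Equiv.refl (Fin r)) G)
    (Gi : ∀ i : Fin r, SimpleGraph (Fin (P ((i : ℕ) + 1) - P (i : ℕ))))
    (hGi : ∀ i : Fin r, IsGBOrdering (Equiv.refl (Fin (P ((i : ℕ) + 1) - P (i : ℕ)))) (Gi i))
    (Gexp : SimpleGraph (Fin (P r)))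
    (hGexp : ∀ k l : Fin (P r), Gexp.Adj k l ↔
      ((∃ (i : Fin r) (a b : Fin (P ((i : ℕ) + 1) - P (i : ℕ))),
          (Gi i).Adj a b ∧ (k : ℕ) = P (i : ℕ) + (a : ℕ) ∧ (l : ℕ) = P (i : ℕ) + (b : ℕ)) ∨
       (∃ i j : Fin r, i ≠ j ∧ G.Adj i j ∧
          (k : ℕ) + 1 = P ((i : ℕ) + 1) ∧ (l : ℕ) + 1 = P ((j : ℕ) + 1)))) :
    IsGBOrdering (Equiv.refl (Fin (P r))) Gexp ∧ IsGB Gexp :=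
  isGB_expanded_graph_general r P hPmono G hG Gi hGi Gexp hGexp
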